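/- arXiv:1601.01067 — 2 statements merged into one kernel-verified Lean document; each statement's English description precedes it below -/
import Mathlib

section
/- Let f₁,…,f_m ∈ ℤ[x] be polynomials, not all zero, with d = max_i deg(f_i) and h = max_i height(f_i), and let g = gcd(f₁,…,f_m) in ℤ[x]. Then for every i with f_i ≠ 0, the cofactor f_i/g (the polynomial q_i ∈ ℤ[x] with g·q_i = f_i) satisfies height(f_i/g) ≤ (1/2)·log(d+1) + d·log 2 + h. -/
/-!
Mignotte's bound. Write `M` for the Mahler measure. Each coefficient of `q` is at most
`C(deg q, k) · M(q) ≤ 2^d · M(q)`. Since `M` is multiplicative and `M(g) ≥ 1` for a nonzero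
integer polynomial (its leading coefficient is a nonzero integer), `M(q) ≤ M(g q) = M(f_i)`, and
Landau's inequality gives `M(f_i) ≤ ‖f_i‖₂ ≤ √(d+1) · |f_i|`. Taking logarithms gives the bound.
-/

open Polynomial

/-- The height of an integer polynomial: the natural logarithm of the maximum of the
absolute values of its coefficients (the height of 0 is 0, since `Real.log 0 = 0`). -/
noncomputable def polyHeight (f : Polynomial ℤ) : ℝ :=
  Real.log (((Finset.range (f.natDegree + 1)).sup fun k => (f.coeff k).natAbs : ℕ) : ℝ)

namespace Polynomial

lemma supNorm_pos {A : Type*} [NormedRing A] {p : A[X]} (hp : p ≠ 0) : 0 < p.supNorm :=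
  p.supNorm_nonneg.lt_of_ne' (p.supNorm_eq_zero_iff.not.mpr hp)

lemma supNorm_map_of_isometry {A B : Type*} [NormedRing A] [NormedRing B] {v : A →+* B}
    (hv : Isometry v) (p : A[X]) : (p.map v).supNorm = p.supNorm := by
  simp [supNorm_eq_iSup, hv.norm_map_of_map_zero (map_zero v)]

lemma natCast_sup_natAbs_coeff_eq_supNorm (p : ℤ[X]) :
    (((Finset.range (p.natDegree + 1)).sup fun k => (p.coeff k).natAbs : ℕ) : ℝ) =
      p.supNorm := by
  have norm_coeff (k : ℕ) : ‖p.coeff k‖ = ((p.coeff k).natAbs : ℝ) := by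
    rw [Int.norm_eq_abs, Nat.cast_natAbs, Int.cast_abs]
  apply le_antisymm
  · obtain ⟨k, -, hk⟩ := Finset.exists_mem_eq_sup (Finset.range (p.natDegree + 1))
      Finset.nonempty_range_add_one fun k => (p.coeff k).natAbs
    rw [hk, ← norm_coeff]
    exact p.le_supNorm k
  · obtain ⟨i, hi⟩ := p.exists_eq_supNorm
    rw [hi, norm_coeff, Nat.cast_le]
    rcases le_or_gt i p.natDegree with hi | hi
    · exact Finset.le_sup (f := fun k => (p.coeff k).natAbs) (by simpa [Nat.lt_succ_iff])
    · simp [coeff_eq_zero_of_natDegree_lt hi]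

lemma supNorm_le_of_mul_eq {f g q : ℤ[X]} (hf : f ≠ 0) (hgq : g * q = f) :
    q.supNorm ≤ 2 ^ f.natDegree * √(f.natDegree + 1) * f.supNorm := by
  have hg : g ≠ 0 := by rintro rfl; exact hf (by rw [← hgq, zero_mul])
  have hdeg : q.natDegree ≤ f.natDegree := natDegree_le_of_dvd ⟨g, by rw [← hgq, mul_comm]⟩ hf
  have hv : Isometry (Int.castRingHom ℂ) := Complex.isometry_intCast
  have hchoose (i : ℕ) : (q.natDegree.choose i : ℝ) ≤ 2 ^ f.natDegree := by
    exact_mod_cast (Nat.choose_le_two_pow _ _).trans (Nat.pow_le_pow_right two_pos hdeg)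
  have hmahler : q.mapMahlerMeasure (Int.castRingHom ℂ) ≤
      f.mapMahlerMeasure (Int.castRingHom ℂ) := by
    rw [← hgq, mapMahlerMeasure_mul]
    exact le_mul_of_one_le_left (mapMahlerMeasure_nonneg _ _) (one_le_mahlerMeasure_of_ne_zero hg)
  have hlandau : f.mapMahlerMeasure (Int.castRingHom ℂ) ≤ √(f.natDegree + 1) * f.supNorm := by
    simpa [mapMahlerMeasure_eq, supNorm_map_of_isometry hv,
      natDegree_map_eq_of_injective hv.injective] using
      (f.map (Int.castRingHom ℂ)).mahlerMeasure_le_sqrt_natDegree_add_one_mul_supNorm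
  obtain ⟨i, hi⟩ := q.exists_eq_supNorm
  calc q.supNorm = ‖q.coeff i‖ := hi
    _ ≤ q.natDegree.choose i * q.mapMahlerMeasure (Int.castRingHom ℂ) :=
      norm_coeff_le_choose_mul_mapMahlerMeasure _ hv i q
    _ ≤ 2 ^ f.natDegree * (√(f.natDegree + 1) * f.supNorm) := by
      gcongr
      · exact mapMahlerMeasure_nonneg _ _
      · exact hchoose i
      · exact hmahler.trans hlandau
    _ = 2 ^ f.natDegree * √(f.natDegree + 1) * f.supNorm := by ring

end Polynomial

lemma polyHeight_eq_log_supNorm (p : ℤ[X]) : polyHeight p = Real.log p.supNorm := by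
  rw [polyHeight, natCast_sup_natAbs_coeff_eq_supNorm]

theorem stmt4_general {m : ℕ} (f : Fin m → Polynomial ℤ)
    (d : ℕ) (hd : ∀ i, (f i).natDegree ≤ d)
    (h : ℝ) (hh : ∀ i, polyHeight (f i) ≤ h)
    (g : Polynomial ℤ) :
    ∀ i, f i ≠ 0 → ∀ q : Polynomial ℤ, g * q = f i →
      polyHeight q ≤ (1 / 2) * Real.log ((d : ℝ) + 1) + (d : ℝ) * Real.log 2 + h := by
  intro i hfi q hq
  have hq0 : q ≠ 0 := by rintro rfl; exact hfi (by rw [← hq, mul_zero])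
  have hbound : q.supNorm ≤ 2 ^ d * √(d + 1) * (f i).supNorm := by
    refine (supNorm_le_of_mul_eq hfi hq).trans ?_
    have hdeg : ((f i).natDegree : ℝ) ≤ d := by exact_mod_cast hd i
    gcongr
    · exact supNorm_nonneg _
    · exact one_le_two
    · exact hd i
  have hheight := hh i
  rw [polyHeight_eq_log_supNorm] at hheight ⊢
  calc Real.log q.supNorm ≤ Real.log (2 ^ d * √(d + 1) * (f i).supNorm) :=
        Real.log_le_log (supNorm_pos hq0) hbound
    _ = (1 / 2) * Real.log ((d : ℝ) + 1) + d * Real.log 2 + Real.log (f i).supNorm := by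
        rw [Real.log_mul (by positivity) (supNorm_pos hfi).ne', Real.log_mul (by positivity)
          (by positivity), Real.log_pow, Real.log_sqrt (by positivity)]
        ring
    _ ≤ (1 / 2) * Real.log ((d : ℝ) + 1) + d * Real.log 2 + h := by linarith

/-- Let f₁,…,f_m ∈ ℤ[x], not all zero, with d = max deg(f_i) and
h = max height(f_i), and let g = gcd(f₁,…,f_m) in ℤ[x]. Then for every i with f_i ≠ 0,
the cofactor q_i ∈ ℤ[x] with g·q_i = f_i satisfies
height(f_i/g) ≤ (1/2)·log(d+1) + d·log 2 + h. -/
theorem stmt4 {m : ℕ} (f : Fin m → Polynomial ℤ) (hne : ∃ i, f i ≠ 0)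
    (d : ℕ) (hd : ∀ i, (f i).natDegree ≤ d)
    (h : ℝ) (hh : ∀ i, polyHeight (f i) ≤ h)
    (g : Polynomial ℤ) (hgdvd : ∀ i, g ∣ f i)
    (hggreatest : ∀ c : Polynomial ℤ, (∀ i, c ∣ f i) → c ∣ g) :
    ∀ i, f i ≠ 0 → ∀ q : Polynomial ℤ, g * q = f i →
      polyHeight q ≤ (1 / 2) * Real.log ((d : ℝ) + 1) + (d : ℝ) * Real.log 2 + h :=
  stmt4_general f d hd h hh g
end

section
/- Let f₁,…,f_m ∈ ℤ[x] with d = max_i deg(f_i) ≥ 1 and h = max_i height(f_i). If 1 belongs to the ideal generated by f₁,…,f_m in ℤ[x], then there exist h₁,…,h_m ∈ ℤ[x] with deg(h_i) ≤ 3d²(2h + log(d+1)) for every i, such that 1 = f₁h₁ + ⋯ + f_m h_m. -/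
open Polynomial

/-!
Over `ℚ` the Bézout identity can be taken with cofactors of degree `< d`, so `1` lies in the
`ℚ`-span of the coefficient vectors of the `f i * X ^ k`, `k < d`, in `ℚ^{2d}`. A nonsingular
square integer matrix built from some of these vectors and unit vectors, together with Cramer's
rule and Hadamard's inequality, gives a nonzero integer `a = ∑ f i * p i` with `deg p i < d` and
`|a| ≤ (d + 1)^d e^{2dh}`.

For every prime `p`, a Bézout identity over `𝔽_p` lifts to `1 = ∑ f i * v i + p * w` with
`deg v i < d` and `deg w < 2d`. Substituting such identities into one another along the prime
factorisation of `|a|` gives `1 = ∑ f i * g i + |a| * w` with degrees at most `(2d - 1) Ω(|a|)`,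
and `Ω(|a|) log 2 ≤ log |a| ≤ d (2h + log (d + 1))`. Replacing `|a|` by `± ∑ f i * p i` finishes
the proof.
-/

open Set Submodule Matrix
open scoped ArithmeticFunction.Omega

theorem Ideal.one_mem_span_range_comp {A B ι : Type*} [CommSemiring A] [CommSemiring B]
    (ψ : A →+* B) {f : ι → A} (h : (1 : A) ∈ Ideal.span (range f)) :
    (1 : B) ∈ Ideal.span (range (ψ ∘ f)) := by
  rw [← Ideal.eq_top_iff_one] at h ⊢
  rw [range_comp, ← Ideal.map_span, h, Ideal.map_top]

theorem Ideal.nonempty_of_one_mem_span_range {A ι : Type*} [CommSemiring A] [Nontrivial A]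
    {f : ι → A} (h : (1 : A) ∈ Ideal.span (range f)) : Nonempty ι := by
  by_contra hι
  have := not_nonempty_iff.1 hι
  rw [range_eq_empty, Ideal.span_empty, Ideal.mem_bot] at h
  exact one_ne_zero h

namespace Polynomial

theorem exists_sum_mul_eq_one_of_natDegree_le {K ι : Type*} [Field K] [Fintype ι]
    {F : ι → K[X]} {d : ℕ} (hd : 1 ≤ d) (hF : ∀ i, (F i).natDegree ≤ d)
    (h1 : (1 : K[X]) ∈ Ideal.span (Set.range F)) :
    ∃ v : ι → K[X], (∀ i, (v i).natDegree ≤ d - 1) ∧ ∑ i, F i * v i = 1 := by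
  classical
  obtain ⟨c, hc⟩ := Ideal.mem_span_range_iff_exists_fun.1 h1
  obtain ⟨j, hj⟩ : ∃ j, F j ≠ 0 := by
    by_contra! h
    simp [h] at hc
  -- reduce every cofactor modulo `F j` and collect the quotients into the `j`-th cofactor
  set r : ι → K[X] := fun i => c i % F j
  set Q := ∑ i, F i * (c i / F j)
  have hsum : ∑ i, F i * r i + F j * Q = 1 := by
    rw [← hc, Finset.mul_sum, ← Finset.sum_add_distrib]
    refine Finset.sum_congr rfl fun i _ => ?_
    linear_combination F i * EuclideanDomain.mod_add_div (c i) (F j)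
  have hr : ∀ i, r i = 0 ∨ (r i).natDegree < (F j).natDegree := fun i =>
    (em _).imp_right fun h => natDegree_lt_natDegree h (degree_mod_lt _ hj)
  have hr_le : ∀ i, (r i).natDegree ≤ d - 1 := fun i => by
    rcases hr i with h | h
    · simp [h]
    · have := hF j; omega
  have hQ : Q.natDegree ≤ d - 1 := by
    by_cases hQ0 : Q = 0
    · simp [hQ0]
    have hterm : ∀ i, (F i * r i).natDegree ≤ d + (F j).natDegree - 1 := fun i => by
      rcases hr i with h | h
      · simp [h]
      · have := natDegree_mul_le (p := F i) (q := r i); have := hF i; omega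
    have hbound : (1 - ∑ i, F i * r i).natDegree ≤ d + (F j).natDegree - 1 :=
      (natDegree_sub_le _ _).trans <| max_le (by simp) <|
        natDegree_sum_le_of_forall_le _ _ fun i _ => hterm i
    rw [← eq_sub_of_add_eq' hsum, natDegree_mul hj hQ0] at hbound
    omega
  refine ⟨fun i => r i + Pi.single (M := fun _ => K[X]) j Q i, fun i => ?_, ?_⟩
  · refine (natDegree_add_le _ _).trans (max_le (hr_le i) ?_)
    rcases eq_or_ne i j with rfl | hij
    · simpa using hQ
    · simp [hij]
  · simp [mul_add, Finset.sum_add_distrib, Pi.single_apply, hsum]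

end Polynomial

def IsBezoutModulus {R ι : Type*} [CommRing R] [Fintype ι] (f : ι → R[X]) (D : ℕ) (N : R) :
    Prop :=
  ∃ (g : ι → R[X]) (w : R[X]), (∀ i, (g i).natDegree ≤ D) ∧ w.natDegree ≤ D ∧
    1 = ∑ i, f i * g i + C N * w

namespace IsBezoutModulus

variable {R ι : Type*} [CommRing R] [Fintype ι] {f : ι → R[X]} {D : ℕ} {N : R}

theorem one (f : ι → R[X]) : IsBezoutModulus f 0 1 :=
  ⟨0, 1, fun _ => by simp, by simp, by simp⟩

theorem neg (h : IsBezoutModulus f D N) : IsBezoutModulus f D (-N) := by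
  obtain ⟨g, w, hg, hw, e⟩ := h
  exact ⟨g, -w, hg, by rwa [natDegree_neg], by rw [e, C_neg]; ring⟩

theorem mul {D₁ D₂ : ℕ} {N₁ N₂ : R} (h₁ : IsBezoutModulus f D₁ N₁)
    (h₂ : IsBezoutModulus f D₂ N₂) : IsBezoutModulus f (D₁ + D₂) (N₁ * N₂) := by
  obtain ⟨g₁, w₁, hg₁, hw₁, e₁⟩ := h₁
  obtain ⟨g₂, w₂, hg₂, hw₂, e₂⟩ := h₂
  refine ⟨fun i => g₁ i + C N₁ * w₁ * g₂ i, w₁ * w₂, fun i => ?_,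
    natDegree_mul_le.trans (add_le_add hw₁ hw₂), ?_⟩
  · refine (natDegree_add_le _ _).trans (max_le ((hg₁ i).trans (Nat.le_add_right _ _)) ?_)
    exact natDegree_mul_le.trans (add_le_add ((natDegree_C_mul_le _ _).trans hw₁) (hg₂ i))
  · have hsum : ∑ i, f i * (g₁ i + C N₁ * w₁ * g₂ i)
        = ∑ i, f i * g₁ i + C N₁ * w₁ * ∑ i, f i * g₂ i := by
      rw [Finset.mul_sum, ← Finset.sum_add_distrib]
      exact Finset.sum_congr rfl fun i _ => by ring
    rw [hsum, C_mul]
    linear_combination e₁ + C N₁ * w₁ * e₂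

theorem natCast_of_prime {E : ℕ} (hp : ∀ p : ℕ, p.Prime → IsBezoutModulus f E p) {N : ℕ}
    (hN : N ≠ 0) : IsBezoutModulus f (E * Ω N) N := by
  induction N using Nat.recOnMul with
  | zero => exact absurd rfl hN
  | one => simpa using one f
  | prime p hp' => simpa [ArithmeticFunction.cardFactors_apply_prime hp'] using hp p hp'
  | mul a b ha hb =>
    obtain ⟨ha0, hb0⟩ := mul_ne_zero_iff.1 hN
    rw [ArithmeticFunction.cardFactors_mul ha0 hb0, mul_add, Nat.cast_mul]
    exact (ha ha0).mul (hb hb0)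

theorem intCast_of_prime {E : ℕ} (hp : ∀ p : ℕ, p.Prime → IsBezoutModulus f E p) {N : ℤ}
    (hN : N ≠ 0) : IsBezoutModulus f (E * Ω N.natAbs) N := by
  obtain ⟨n, rfl | rfl⟩ := Int.eq_nat_or_neg N
  · simpa using natCast_of_prime hp (N := n) (by simpa using hN)
  · simpa using (natCast_of_prime hp (N := n) (by simpa using hN)).neg

theorem exists_eq_sum_mul (h : IsBezoutModulus f D N) {E : ℕ} {p : ι → R[X]}
    (hp : ∀ i, (p i).natDegree ≤ E) (hN : C N = ∑ i, f i * p i) :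
    ∃ g : ι → R[X], (∀ i, (g i).natDegree ≤ E + D) ∧ 1 = ∑ i, f i * g i := by
  obtain ⟨g, w, hg, hw, e⟩ := h
  refine ⟨fun i => g i + p i * w, fun i => ?_, ?_⟩
  · exact (natDegree_add_le _ _).trans <| max_le ((hg i).trans (Nat.le_add_left _ _))
      (natDegree_mul_le.trans (add_le_add (hp i) hw))
  · rw [e, hN, Finset.sum_mul, ← Finset.sum_add_distrib]
    exact Finset.sum_congr rfl fun i _ => by ring

end IsBezoutModulus

theorem isBezoutModulus_prime {ι : Type*} [Fintype ι] {f : ι → ℤ[X]} {d : ℕ} (hd1 : 1 ≤ d)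
    (hd : ∀ i, (f i).natDegree ≤ d) (h1 : (1 : ℤ[X]) ∈ Ideal.span (range f)) {p : ℕ}
    (hp : p.Prime) : IsBezoutModulus f (2 * d - 1) p := by
  have := Fact.mk hp
  set φ := Int.castRingHom (ZMod p)
  obtain ⟨V, hV, hsum⟩ := exists_sum_mul_eq_one_of_natDegree_le hd1
    (fun i => natDegree_map_le.trans (hd i)) (Ideal.one_mem_span_range_comp (mapRingHom φ) h1)
  choose v hvV hvdeg using fun i => exists_natDegree_eq_of_mem_lifts
    ((mem_lifts _).2 (map_surjective φ ZMod.intCast_surjective (V i)))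
  set S := ∑ i, f i * v i
  have hS : S.natDegree ≤ 2 * d - 1 := natDegree_sum_le_of_forall_le _ _ fun i _ => by
    have := natDegree_mul_le (p := f i) (q := v i)
    have := hd i; have := hvdeg i; have := hV i
    omega
  have hdvd : C (p : ℤ) ∣ 1 - S := by
    have hmap : (1 - S).map φ = 0 := by
      simp [S, Polynomial.map_sum, hvV, hsum]
    refine (C_dvd_iff_dvd_coeff _ _).2 fun k => ?_
    rw [← ZMod.intCast_zmod_eq_zero_iff_dvd, ← eq_intCast φ, ← coeff_map, hmap, coeff_zero]
  obtain ⟨w, hw⟩ := hdvd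
  refine ⟨v, w, fun i => by have := hvdeg i; have := hV i; omega, ?_, by linear_combination hw⟩
  rw [← natDegree_C_mul (Int.natCast_ne_zero.2 hp.ne_zero), ← hw]
  exact (natDegree_sub_le _ _).trans (max_le (by simp) hS)

theorem Matrix.intCast_det {n R : Type*} [Fintype n] [DecidableEq n] [CommRing R]
    (M : Matrix n n ℤ) : ((M.det : ℤ) : R) = (M.map (Int.cast : ℤ → R)).det :=
  (Int.castRingHom R).map_det M

theorem Matrix.abs_det_le_prod_sqrt_sum_sq {n : ℕ} (A : Matrix (Fin n) (Fin n) ℝ) :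
    |A.det| ≤ ∏ j, √(∑ i, A i j ^ 2) := by
  let e := EuclideanSpace.basisFun (Fin n) ℝ
  have : Fact (Module.finrank ℝ (EuclideanSpace ℝ (Fin n)) = n) := ⟨by simp⟩
  have h := e.toBasis.orientation.abs_volumeForm_apply_le fun j => WithLp.toLp 2 fun i => A i j
  rw [e.toBasis.orientation.volumeForm_robust e rfl, Module.Basis.det_apply] at h
  have hA : e.toBasis.toMatrix (fun j => WithLp.toLp 2 fun i => A i j) = A := by
    ext i j
    simp [e, Module.Basis.toMatrix_apply]
  simpa [hA, EuclideanSpace.norm_eq] using h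

theorem Matrix.det_mul_eq_adjugate_mulVec_of_mulVec_eq {n : Type*} [Fintype n] [DecidableEq n]
    (M : Matrix n n ℤ) (t : n → ℤ) {y : n → ℚ}
    (hy : M.map (Int.cast : ℤ → ℚ) *ᵥ y = fun i => (t i : ℚ)) (k : n) :
    (M.det : ℚ) * y k = (M.adjugate *ᵥ t) k := by
  have h := congrArg ((M.map (Int.cast : ℤ → ℚ)).adjugate *ᵥ ·) hy
  simp only [mulVec_mulVec, adjugate_mul, smul_mulVec, one_mulVec] at h
  have hadj : M.adjugate.map (Int.cast : ℤ → ℚ) = (M.map (Int.cast : ℤ → ℚ)).adjugate :=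
    (Int.castRingHom ℚ).map_adjugate M
  rw [M.intCast_det, ← smul_eq_mul, ← Pi.smul_apply, h, ← hadj]
  exact ((Int.castRingHom ℚ).map_mulVec M.adjugate t k).symm

theorem Matrix.det_smul_mem_span_int_of_mulVec_eq {n : Type*} [Fintype n] [DecidableEq n]
    (M : Matrix n n ℤ) (t : n → ℤ) {y : n → ℚ}
    (hy : M.map (Int.cast : ℤ → ℚ) *ᵥ y = fun i => (t i : ℚ)) {s : Set (n → ℤ)}
    (hs : ∀ k, y k ≠ 0 → Mᵀ k ∈ s) : M.det • t ∈ span ℤ s := by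
  set c := M.adjugate *ᵥ t
  have hc : ∀ k, (c k : ℚ) = M.det * y k := fun k =>
    (M.det_mul_eq_adjugate_mulVec_of_mulVec_eq t hy k).symm
  have hat : M.det • t = ∑ k, c k • Mᵀ k := by
    ext i
    have := congrFun hy i
    simp only [mulVec, dotProduct, map_apply] at this
    apply Int.cast_injective (α := ℚ)
    simp only [Pi.smul_apply, smul_eq_mul, Int.cast_mul, ← this, Finset.mul_sum,
      Finset.sum_apply, Int.cast_sum, hc, transpose_apply]
    exact Finset.sum_congr rfl fun k _ => by ring
  rw [hat]
  refine sum_mem fun k _ => ?_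
  by_cases hk : y k = 0
  · have : (c k : ℚ) = 0 := by rw [hc k, hk, mul_zero]
    simp [Int.cast_eq_zero.1 this]
  · exact smul_mem _ _ (subset_span (hs k hk))

theorem Module.Basis.exists_basis_image_subset_span_le {K V ι : Type*} [DivisionRing K]
    [AddCommGroup V] [Module K V] (e : Module.Basis ι K V) (s : Set V) :
    ∃ (b : Module.Basis ι K V) (S : Set ι),
      b '' S ⊆ s ∧ b '' Sᶜ ⊆ range e ∧ span K s ≤ span K (b '' S) := by
  obtain ⟨s', hs's, hspan, hli⟩ := exists_linearIndependent K s
  replace hli : LinearIndepOn K id s' := hli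
  have hsub : s' ⊆ s' ∪ range e := subset_union_left
  have htop : ⊤ ≤ span K (s' ∪ range e) := e.span_eq ▸ span_mono subset_union_right
  set B := Module.Basis.extendLe hli hsub htop
  set b := B.reindex (B.indexEquiv e)
  have hrange : range b = hli.extend hsub := by
    rw [Module.Basis.range_reindex, Module.Basis.range_extendLe]
  refine ⟨b, {k | b k ∈ s'}, ?_, ?_, ?_⟩
  · rintro _ ⟨k, hk, rfl⟩
    exact hs's hk
  · rintro _ ⟨k, hk, rfl⟩
    exact (hli.extend_subset hsub (hrange ▸ mem_range_self k)).resolve_left hk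
  · rw [← hspan]
    refine span_mono fun x hx => ?_
    obtain ⟨k, rfl⟩ := hrange ▸ hli.subset_extend hsub hx
    exact ⟨k, hx, rfl⟩

theorem exists_ne_zero_smul_mem_span_int {n : ℕ} {ι : Type*} (w : ι → Fin n → ℤ)
    (t : Fin n → ℤ) {β : ℝ} (hβ : 1 ≤ β) (hw : ∀ j, √(∑ i, (w j i : ℝ) ^ 2) ≤ β)
    (ht : (fun i => (t i : ℚ)) ∈ span ℚ (range fun j i => (w j i : ℚ))) :
    ∃ a : ℤ, a ≠ 0 ∧ |(a : ℝ)| ≤ β ^ n ∧ a • t ∈ span ℤ (range w) := by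
  obtain ⟨b, S, hbS, hbSc, hspan⟩ :=
    (Pi.basisFun ℚ (Fin n)).exists_basis_image_subset_span_le (range fun j i => (w j i : ℚ))
  have hz : ∀ k, ∃ z : Fin n → ℤ, (fun i => (z i : ℚ)) = b k ∧
      √(∑ i, (z i : ℝ) ^ 2) ≤ β ∧ (k ∈ S → z ∈ range w) := by
    intro k
    by_cases hk : k ∈ S
    · obtain ⟨j, hj⟩ := hbS ⟨k, hk, rfl⟩
      exact ⟨w j, hj, hw j, fun _ => ⟨j, rfl⟩⟩
    · obtain ⟨l, hl⟩ := hbSc ⟨k, hk, rfl⟩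
      refine ⟨Pi.single l 1, ?_, ?_, fun h => absurd h hk⟩
      · rw [← hl]
        ext i
        by_cases hil : i = l <;> simp [hil]
      · simpa [Pi.single_apply, apply_ite] using hβ
  choose z hzb hzβ hzw using hz
  let M : Matrix (Fin n) (Fin n) ℤ := Matrix.of fun i k => z k i
  have hMb : M.map (Int.cast : ℤ → ℚ) = (Pi.basisFun ℚ (Fin n)).toMatrix b := by
    ext i k
    simp [M, Module.Basis.toMatrix_apply, ← hzb k]
  have ha0 : M.det ≠ 0 := by
    have h := ((Pi.basisFun ℚ (Fin n)).isUnit_det b).ne_zero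
    rw [Module.Basis.det_apply, ← hMb, ← M.intCast_det] at h
    exact_mod_cast h
  have ha : |(M.det : ℝ)| ≤ β ^ n := by
    rw [M.intCast_det]
    refine (abs_det_le_prod_sqrt_sum_sq _).trans ?_
    calc ∏ k, √(∑ i, ((M.map (Int.cast : ℤ → ℝ)) i k) ^ 2) ≤ ∏ _k : Fin n, β :=
          Finset.prod_le_prod (fun _ _ => Real.sqrt_nonneg _) fun k _ => hzβ k
      _ = β ^ n := by simp
  set y := b.repr fun i => (t i : ℚ)
  have hy : M.map (Int.cast : ℤ → ℚ) *ᵥ y = fun i => (t i : ℚ) := by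
    rw [hMb, Module.Basis.toMatrix_mulVec_repr]
    ext i
    simp
  have hyS : ∀ k ∉ S, y k = 0 := fun k hk =>
    Finsupp.notMem_support_iff.1 fun h => hk ((Module.Basis.mem_span_image b).1 (hspan ht) h)
  refine ⟨M.det, ha0, ha, M.det_smul_mem_span_int_of_mulVec_eq t hy fun k hk => ?_⟩
  exact hzw k (by_contra fun hkS => hk (hyS k hkS))

namespace Polynomial

noncomputable def coeffVec (R : Type*) [Semiring R] (n : ℕ) : R[X] →ₗ[R] Fin n → R :=
  LinearMap.pi fun l => lcoeff R l

variable {R ι : Type*}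

@[simp]
theorem coeffVec_apply [Semiring R] (n : ℕ) (p : R[X]) (l : Fin n) :
    coeffVec R n p l = p.coeff l :=
  rfl

theorem eq_of_coeffVec_eq [Semiring R] {n : ℕ} {p q : R[X]} (hp : p.natDegree < n)
    (hq : q.natDegree < n) (h : coeffVec R n p = coeffVec R n q) : p = q := by
  ext l
  by_cases hl : l < n
  · exact congrFun h ⟨l, hl⟩
  · rw [coeff_eq_zero_of_natDegree_lt (by omega), coeff_eq_zero_of_natDegree_lt (by omega)]

theorem sum_mul_mem_span_mul_X_pow [CommSemiring R] [Fintype ι] {d : ℕ} (f p : ι → R[X])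
    (hp : ∀ i, (p i).natDegree < d) :
    ∑ i, f i * p i ∈ span R (range fun ik : ι × Fin d => f ik.1 * X ^ (ik.2 : ℕ)) := by
  refine sum_mem fun i _ => ?_
  rw [as_sum_range' (p i) d (hp i),
    ← Fin.sum_univ_eq_sum_range (fun k => monomial k ((p i).coeff k)), Finset.mul_sum]
  refine sum_mem fun k _ => ?_
  rw [← C_mul_X_pow_eq_monomial, ← smul_eq_C_mul, mul_smul_comm]
  exact smul_mem _ _ (subset_span ⟨(i, k), rfl⟩)

theorem exists_eq_sum_mul_of_mem_span_mul_X_pow [CommSemiring R] [Fintype ι] {d : ℕ}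
    {f : ι → R[X]} {P : R[X]}
    (hP : P ∈ span R (range fun ik : ι × Fin d => f ik.1 * X ^ (ik.2 : ℕ))) :
    ∃ p : ι → R[X], (∀ i, (p i).natDegree ≤ d - 1) ∧ P = ∑ i, f i * p i := by
  obtain ⟨c, rfl⟩ := (mem_span_range_iff_exists_fun R).1 hP
  refine ⟨fun i => ∑ k : Fin d, c (i, k) • X ^ (k : ℕ), fun i => ?_, ?_⟩
  · refine natDegree_sum_le_of_forall_le _ _ fun k _ => ?_
    refine (natDegree_smul_le _ _).trans ((natDegree_X_pow_le _).trans ?_)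
    have := k.2
    omega
  · simp [Fintype.sum_prod_type, Finset.mul_sum]

theorem sum_sq_coeff_mul_X_pow_le {f : ℤ[X]} {d : ℕ} {B : ℝ} (hd : f.natDegree ≤ d)
    (hB : ∀ j, |(f.coeff j : ℝ)| ≤ B) (k N : ℕ) :
    ∑ l : Fin N, ((f * X ^ k).coeff l : ℝ) ^ 2 ≤ (d + 1) * B ^ 2 := by
  have hB0 : 0 ≤ B := (abs_nonneg _).trans (hB 0)
  have hzero : ∀ l ∉ Finset.Ico k (k + d + 1), (f * X ^ k).coeff l = 0 := by
    intro l hl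
    rw [Finset.mem_Ico, not_and_or, not_le, not_lt] at hl
    rw [coeff_mul_X_pow']
    split_ifs with hkl
    · exact coeff_eq_zero_of_natDegree_lt (by omega)
    · rfl
  have hle : ∀ l, ((f * X ^ k).coeff l : ℝ) ^ 2 ≤ B ^ 2 := by
    intro l
    rw [← sq_abs]
    refine pow_le_pow_left₀ (abs_nonneg _) ?_ 2
    rw [coeff_mul_X_pow']
    split_ifs
    · exact hB _
    · simpa using hB0
  calc ∑ l : Fin N, ((f * X ^ k).coeff l : ℝ) ^ 2
      = ∑ l ∈ Finset.range N, ((f * X ^ k).coeff l : ℝ) ^ 2 :=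
        Fin.sum_univ_eq_sum_range (fun l => ((f * X ^ k).coeff l : ℝ) ^ 2) N
    _ = ∑ l ∈ Finset.range N ∩ Finset.Ico k (k + d + 1), ((f * X ^ k).coeff l : ℝ) ^ 2 :=
        (Finset.sum_subset Finset.inter_subset_left fun l _ hl => by
          simp [hzero l fun h => hl (Finset.mem_inter.2 ⟨by assumption, h⟩)]).symm
    _ ≤ ∑ l ∈ Finset.Ico k (k + d + 1), ((f * X ^ k).coeff l : ℝ) ^ 2 :=
        Finset.sum_le_sum_of_subset_of_nonneg Finset.inter_subset_right fun _ _ _ => sq_nonneg _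
    _ ≤ (d + 1) * B ^ 2 := by
        refine (Finset.sum_le_card_nsmul _ _ _ fun l _ => hle l).trans_eq ?_
        rw [Nat.card_Ico, nsmul_eq_mul, show k + d + 1 - k = d + 1 by omega]
        push_cast
        ring

end Polynomial

theorem exists_C_eq_sum_mul_of_one_mem_span {ι : Type*} [Fintype ι] {f : ι → ℤ[X]} {d : ℕ}
    {B : ℝ} (hd1 : 1 ≤ d) (hd : ∀ i, (f i).natDegree ≤ d) (hB : 1 ≤ B)
    (hf : ∀ i k, |((f i).coeff k : ℝ)| ≤ B) (h1 : (1 : ℤ[X]) ∈ Ideal.span (range f)) :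
    ∃ a : ℤ, a ≠ 0 ∧ |(a : ℝ)| ≤ ((d + 1) * B ^ 2) ^ d ∧
      ∃ p : ι → ℤ[X], (∀ i, (p i).natDegree ≤ d - 1) ∧ C a = ∑ i, f i * p i := by
  set g : ι × Fin d → ℤ[X] := fun ik => f ik.1 * X ^ (ik.2 : ℕ)
  set β := √((d + 1) * B ^ 2)
  have hβ : 1 ≤ β := Real.one_le_sqrt.2 (by nlinarith)
  have hβpow : β ^ (2 * d) = ((d + 1) * B ^ 2) ^ d := by
    rw [pow_mul, Real.sq_sqrt (by positivity)]
  have hw : ∀ ik, √(∑ l, (coeffVec ℤ (2 * d) (g ik) l : ℝ) ^ 2) ≤ β := fun ik =>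
    Real.sqrt_le_sqrt (by simpa using sum_sq_coeff_mul_X_pow_le (hd ik.1) (hf ik.1) ik.2 (2 * d))
  have ht : (fun l => (coeffVec ℤ (2 * d) 1 l : ℚ)) ∈
      span ℚ (range fun ik l => (coeffVec ℤ (2 * d) (g ik) l : ℚ)) := by
    obtain ⟨q, hq, hsum⟩ := exists_sum_mul_eq_one_of_natDegree_le hd1
      (fun i => natDegree_map_le.trans (hd i))
      (Ideal.one_mem_span_range_comp (mapRingHom (Int.castRingHom ℚ)) h1)
    have := mem_map_of_mem (f := coeffVec ℚ (2 * d)) <|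
      sum_mul_mem_span_mul_X_pow (d := d) (fun i => (f i).map (Int.castRingHom ℚ)) q fun i => by
        have := hq i; omega
    rw [hsum, map_span, ← range_comp] at this
    convert this using 3
    · ext ik l
      simp only [g, Function.comp_apply, coeffVec_apply]
      rw [← Polynomial.map_X (Int.castRingHom ℚ), ← Polynomial.map_pow, ← Polynomial.map_mul,
        coeff_map, eq_intCast]
    · simp [coeff_one]
  obtain ⟨a, ha0, ha, hat⟩ := exists_ne_zero_smul_mem_span_int _ _ hβ hw ht
  rw [show (fun ik => coeffVec ℤ (2 * d) (g ik)) = coeffVec ℤ (2 * d) ∘ g from rfl, range_comp,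
    ← map_span] at hat
  obtain ⟨P, hP, hPa⟩ := hat
  obtain ⟨p, hp, rfl⟩ := exists_eq_sum_mul_of_mem_span_mul_X_pow hP
  refine ⟨a, ha0, hβpow ▸ ha, p, hp, eq_of_coeffVec_eq (n := 2 * d) ?_ ?_ ?_⟩
  · rw [natDegree_C]; omega
  · refine (natDegree_sum_le_of_forall_le _ _ fun i _ => natDegree_mul_le.trans
      (add_le_add (hd i) (hp i))).trans_lt (by omega)
  · rw [hPa, ← map_smul, smul_eq_C_mul, mul_one]

theorem Nat.two_pow_cardFactors_le {N : ℕ} (hN : N ≠ 0) : 2 ^ Ω N ≤ N := by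
  rw [ArithmeticFunction.cardFactors_apply]
  conv_rhs => rw [← Nat.prod_primeFactorsList hN]
  exact List.pow_card_le_prod _ _ fun p hp => (Nat.prime_of_mem_primeFactorsList hp).two_le

theorem Int.cardFactors_natAbs_mul_log_two_le {a : ℤ} (ha : a ≠ 0) :
    Ω a.natAbs * Real.log 2 ≤ Real.log |(a : ℝ)| := by
  rw [← Real.log_pow, ← Int.cast_abs, ← Int.natCast_natAbs, Int.cast_natCast]
  exact Real.log_le_log (by positivity) (by exact_mod_cast Nat.two_pow_cardFactors_le (by simpa))

theorem polyHeight_nonneg (f : ℤ[X]) : 0 ≤ polyHeight f :=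
  Real.log_natCast_nonneg _

theorem abs_coeff_le_exp_polyHeight (f : ℤ[X]) (k : ℕ) :
    |(f.coeff k : ℝ)| ≤ Real.exp (polyHeight f) := by
  set M := (Finset.range (f.natDegree + 1)).sup fun k => (f.coeff k).natAbs
  have hk : (f.coeff k).natAbs ≤ M := by
    rcases le_or_gt k f.natDegree with hk | hk
    · exact Finset.le_sup (f := fun k => (f.coeff k).natAbs) (Finset.mem_range.2 (by omega))
    · simp [coeff_eq_zero_of_natDegree_lt hk]
  rw [← Int.cast_abs, ← Int.natCast_natAbs, Int.cast_natCast]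
  rcases Nat.eq_zero_or_pos M with hM | hM
  · simp [show (f.coeff k).natAbs = 0 by omega, (Real.exp_pos _).le]
  · rw [polyHeight, Real.exp_log (by exact_mod_cast hM)]
    exact_mod_cast hk

theorem natCast_sub_one_add_mul_le_three_mul_sq_mul {d c : ℕ} {x : ℝ} (hd : 1 ≤ d)
    (hx : Real.log 2 ≤ x) (hc : c * Real.log 2 ≤ d * x) :
    ((d - 1 + (2 * d - 1) * c : ℕ) : ℝ) ≤ 3 * d ^ 2 * x := by
  have hlog := Real.log_two_gt_d9
  have hd' : (1 : ℝ) ≤ d := by exact_mod_cast hd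
  push_cast [Nat.cast_sub hd, Nat.cast_sub (show 1 ≤ 2 * d by omega)]
  -- `3 * log 2 > 2` leaves enough room to absorb `d - 1`
  suffices h : ((d : ℝ) - 1 + (2 * d - 1) * c) * Real.log 2 ≤ 3 * d ^ 2 * x * Real.log 2 from
    le_of_mul_le_mul_right h (by linarith)
  have hcoef : (0 : ℝ) ≤ 3 * d * Real.log 2 - 2 * d + 1 := by nlinarith
  have hrest : (0 : ℝ) ≤ Real.log 2 * (d ^ 2 * (3 * Real.log 2 - 2) + 1) :=
    mul_nonneg (by linarith) (by nlinarith)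
  nlinarith [mul_le_mul_of_nonneg_left hc (by linarith : (0 : ℝ) ≤ 2 * d - 1),
    mul_le_mul_of_nonneg_left hx (mul_nonneg (by linarith : (0 : ℝ) ≤ d) hcoef)]

/-- Let f₁,…,f_m ∈ ℤ[x] with d = max deg(f_i) ≥ 1 and h = max height(f_i).
If 1 belongs to the ideal generated by the f_i in ℤ[x], then there exist
h₁,…,h_m ∈ ℤ[x] with deg(h_i) ≤ 3d²(2h + log(d+1)) such that 1 = f₁h₁ + ⋯ + f_m h_m. -/
theorem stmt9 {m : ℕ} (f : Fin m → Polynomial ℤ)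
    (d : ℕ) (hd1 : 1 ≤ d) (hd : ∀ i, (f i).natDegree ≤ d)
    (h : ℝ) (hh : ∀ i, polyHeight (f i) ≤ h)
    (h1 : (1 : Polynomial ℤ) ∈ Ideal.span (Set.range f)) :
    ∃ g : Fin m → Polynomial ℤ,
      (∀ i, ((g i).natDegree : ℝ) ≤ 3 * (d : ℝ) ^ 2 * (2 * h + Real.log ((d : ℝ) + 1))) ∧
      (1 : Polynomial ℤ) = ∑ i, f i * g i := by
  obtain ⟨i₀⟩ := Ideal.nonempty_of_one_mem_span_range h1
  have hh0 : 0 ≤ h := (polyHeight_nonneg _).trans (hh i₀)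
  have hcoeff : ∀ i k, |((f i).coeff k : ℝ)| ≤ Real.exp h := fun i k =>
    (abs_coeff_le_exp_polyHeight _ k).trans (Real.exp_le_exp.2 (hh i))
  obtain ⟨a, ha0, ha, p, hp, hpa⟩ :=
    exists_C_eq_sum_mul_of_one_mem_span hd1 hd (Real.one_le_exp hh0) hcoeff h1
  have hmod := IsBezoutModulus.intCast_of_prime (fun q hq => isBezoutModulus_prime hd1 hd h1 hq) ha0
  obtain ⟨g, hg, hsum⟩ := hmod.exists_eq_sum_mul hp (by simpa using hpa)
  have hlog2 : Real.log 2 ≤ Real.log (d + 1) := Real.log_le_log (by norm_num) (by norm_cast; omega)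
  have hlog_a : Real.log |(a : ℝ)| ≤ d * (2 * h + Real.log (d + 1)) := by
    refine (Real.log_le_log (by positivity) ha).trans_eq ?_
    rw [Real.log_pow, Real.log_mul (by positivity) (by positivity), Real.log_pow, Real.log_exp]
    ring
  refine ⟨g, fun i => (Nat.cast_le.2 (hg i)).trans ?_, hsum⟩
  exact natCast_sub_one_add_mul_le_three_mul_sq_mul hd1 (by linarith)
    ((Int.cardFactors_natAbs_mul_log_two_le ha0).trans hlog_a)
end
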